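/- Let w_n ∈ R^d for n = 0,…,N satisfy the linear recurrence (I − L_{n+1}) w_{n+1} = (I + R_n) w_n with matrices L_n, R_n depending (differentiably) on a parameter θ ∈ R, and let J(θ) = Σ_{n=0}^{N} j_n(w_n). If λ_n ∈ R^d satisfy the adjoint system (I − L_N)ᵀ λ_N = −(∂j_N/∂w_N)ᵀ and (I − L_n)ᵀ λ_n = (I + R_n)ᵀ λ_{n+1} − (∂j_n/∂w_n)ᵀ for n = N−1,…,1 (and the n=0 equation similarly), then dJ/dθ = −Σ_{n=0}^{N−1} ⟨(∂L_{n+1}/∂θ) w_{n+1} + (∂R_n/∂θ) w_n, λ_{n+1}⟩. -/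

import Mathlib

/-! Differentiating the recurrence gives the tangent-linear system
`(I - L_{n+1}) w'_{n+1} = (I + R_n) w'_n + s_n`, `w'_0 = 0`, with source
`s_n = L'_{n+1} w_{n+1} + R'_n w_n`, and the chain rule gives `J' = Σ ⟨∇j_n, w'_n⟩`.
Pairing the tangent equations with `λ_{n+1}` and the adjoint equations with `w'_n`, the terms
`⟨λ_n, (I - L_n) w'_n⟩` telescope and only `-Σ ⟨s_n, λ_{n+1}⟩` survives. -/

open Matrix

theorem LinearMap.apply_eq_dotProduct {R n : Type*} [CommSemiring R] [Fintype n] [DecidableEq n]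
    (f : (n → R) →ₗ[R] R) (v : n → R) : f v = (fun i => f (Pi.single i 1)) ⬝ᵥ v :=
  (LinearMap.congr_fun ((dotProductEquiv R n).apply_symm_apply f) v).symm

section Calculus

variable {𝕜 : Type*} [NontriviallyNormedField 𝕜] {m n : Type*} [Fintype n]

theorem DifferentiableAt.hasDerivAt_comp_dotProduct [DecidableEq n] {f : (n → 𝕜) → 𝕜}
    {v : 𝕜 → n → 𝕜} {v' : n → 𝕜} {x : 𝕜} (hf : DifferentiableAt 𝕜 f (v x)) (hv : HasDerivAt v v' x) :
    HasDerivAt (fun t => f (v t)) ((fun i => fderiv 𝕜 f (v x) (Pi.single i 1)) ⬝ᵥ v') x :=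
  LinearMap.apply_eq_dotProduct (fderiv 𝕜 f (v x)).toLinearMap v' ▸
    hf.hasFDerivAt.comp_hasDerivAt x hv

theorem HasDerivAt.matrix_mulVec {A : 𝕜 → Matrix m n 𝕜} {A' : Matrix m n 𝕜} {v : 𝕜 → n → 𝕜}
    {v' : n → 𝕜} {x : 𝕜} (hA : ∀ i k, HasDerivAt (fun t => A t i k) (A' i k) x)
    (hv : HasDerivAt v v' x) :
    HasDerivAt (fun t => A t *ᵥ v t) (A' *ᵥ v x + A x *ᵥ v') x := by
  refine hasDerivAt_pi.2 fun i => ?_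
  have hvk : ∀ k, HasDerivAt (fun t => v t k) (v' k) x := hasDerivAt_pi.1 hv
  simpa [mulVec, dotProduct, ← Finset.sum_add_distrib] using
    HasDerivAt.fun_sum fun k _ => (hA i k).mul (hvk k)

theorem tangent_of_forall_implicit_step [DecidableEq n] {L R : 𝕜 → Matrix n n 𝕜}
    {L' R' : Matrix n n 𝕜} {u v : 𝕜 → n → 𝕜} {u' v' : n → 𝕜} {x : 𝕜}
    (hL : ∀ i k, HasDerivAt (fun t => L t i k) (L' i k) x)
    (hR : ∀ i k, HasDerivAt (fun t => R t i k) (R' i k) x)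
    (hu : HasDerivAt u u' x) (hv : HasDerivAt v v' x)
    (h : ∀ t, (1 - L t) *ᵥ u t = (1 + R t) *ᵥ v t) :
    (1 - L x) *ᵥ u' = (1 + R x) *ᵥ v' + (L' *ᵥ u x + R' *ᵥ v x) := by
  have h1L (i k : n) : HasDerivAt (fun t => (1 - L t) i k) ((-L') i k) x := by
    simpa using (hasDerivAt_const x ((1 : Matrix n n 𝕜) i k)).fun_sub (hL i k)
  have h1R (i k : n) : HasDerivAt (fun t => (1 + R t) i k) (R' i k) x := by
    simpa using (hasDerivAt_const x ((1 : Matrix n n 𝕜) i k)).fun_add (hR i k)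
  have hlhs := HasDerivAt.matrix_mulVec h1L hu
  have hrhs := HasDerivAt.matrix_mulVec h1R hv
  have heq := hlhs.unique (funext h ▸ hrhs)
  rw [neg_mulVec] at heq
  linear_combination heq

end Calculus

theorem sum_dotProduct_tangent_eq_neg_sum_dotProduct_adjoint {R n : Type*} [CommRing R]
    [Fintype n] {A B : ℕ → Matrix n n R} {g v s lam : ℕ → n → R} {N : ℕ} (hN : 0 < N)
    (hv0 : v 0 = 0) (htan : ∀ k < N, A (k + 1) *ᵥ v (k + 1) = B k *ᵥ v k + s k)
    (hterm : (A N)ᵀ *ᵥ lam N = -g N)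
    (hadj : ∀ k, 1 ≤ k → k < N → (A k)ᵀ *ᵥ lam k = (B k)ᵀ *ᵥ lam (k + 1) - g k) :
    ∑ k ∈ Finset.range (N + 1), g k ⬝ᵥ v k = -∑ k ∈ Finset.range N, s k ⬝ᵥ lam (k + 1) := by
  obtain ⟨M, rfl⟩ := Nat.exists_eq_add_one_of_ne_zero hN.ne'
  set c : ℕ → R := fun k => lam (k + 1) ⬝ᵥ (B k *ᵥ v k) with hc
  set t : ℕ → R := fun k => s k ⬝ᵥ lam (k + 1)
  have hstep : ∀ k < M + 1, lam (k + 1) ⬝ᵥ (A (k + 1) *ᵥ v (k + 1)) = c k + t k := fun k hk => by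
    rw [htan k hk, dotProduct_add, dotProduct_comm _ (s k)]
  have hmid : ∀ k < M, g (k + 1) ⬝ᵥ v (k + 1) = c (k + 1) - c k - t k := fun k hk => by
    have hg : g (k + 1) = (B (k + 1))ᵀ *ᵥ lam (k + 2) - (A (k + 1))ᵀ *ᵥ lam (k + 1) := by
      rw [hadj (k + 1) (Nat.le_add_left 1 k) (by omega)]; abel
    rw [dotProduct_comm, hg, dotProduct_sub, dotProduct_transpose_mulVec,
      dotProduct_transpose_mulVec, hstep k (by omega)]
    ring
  have hlast : g (M + 1) ⬝ᵥ v (M + 1) = -(c M + t M) := by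
    rw [dotProduct_comm, ← neg_neg (g (M + 1)), ← hterm, dotProduct_neg,
      dotProduct_transpose_mulVec, hstep M (by omega)]
  calc ∑ k ∈ Finset.range (M + 1 + 1), g k ⬝ᵥ v k
      = ∑ k ∈ Finset.range M, g (k + 1) ⬝ᵥ v (k + 1) + g (M + 1) ⬝ᵥ v (M + 1) := by
        rw [Finset.sum_range_succ, Finset.sum_range_succ', hv0, dotProduct_zero, add_zero]
    _ = ∑ k ∈ Finset.range M, (c (k + 1) - c k - t k) - (c M + t M) := by
        rw [Finset.sum_congr rfl fun k hk => hmid k (Finset.mem_range.1 hk), hlast]; ring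
    _ = -∑ k ∈ Finset.range (M + 1), t k := by
        rw [Finset.sum_sub_distrib, Finset.sum_range_sub, Finset.sum_range_succ]
        simp only [hc, hv0, mulVec_zero, dotProduct_zero]
        ring

theorem discrete_adjoint_gradient_general (d N : ℕ) (hN : 0 < N)
    (L R : ℝ → ℕ → Matrix (Fin d) (Fin d) ℝ)
    (w : ℝ → ℕ → (Fin d → ℝ))
    (j : ℕ → (Fin d → ℝ) → ℝ)
    (lam : ℕ → (Fin d → ℝ))
    (θ₀ : ℝ)
    -- differentiability hypotheses
    (hjdiff : ∀ n, Differentiable ℝ (j n))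
    (hwdiff : ∀ n, DifferentiableAt ℝ (fun θ => w θ n) θ₀)
    (hLdiff : ∀ n i k, DifferentiableAt ℝ (fun θ => L θ n i k) θ₀)
    (hRdiff : ∀ n i k, DifferentiableAt ℝ (fun θ => R θ n i k) θ₀)
    -- the initial state does not depend on θ
    (hw0 : ∀ θ, w θ 0 = w θ₀ 0)
    -- the forward recurrence
    (hrec : ∀ θ, ∀ n < N, (1 - L θ (n + 1)).mulVec (w θ (n + 1)) =
        (1 + R θ n).mulVec (w θ n))
    -- terminal condition for the adjoint variables
    (hterm : (1 - L θ₀ N)ᵀ.mulVec (lam N) =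
        -(fun i => fderiv ℝ (j N) (w θ₀ N) (Pi.single i 1)))
    -- adjoint equations
    (hadj : ∀ n, 1 ≤ n → n < N →
      (1 - L θ₀ n)ᵀ.mulVec (lam n) =
        (1 + R θ₀ n)ᵀ.mulVec (lam (n + 1)) -
          (fun i => fderiv ℝ (j n) (w θ₀ n) (Pi.single i 1))) :
    deriv (fun θ => ∑ n ∈ Finset.range (N + 1), j n (w θ n)) θ₀ =
      -∑ n ∈ Finset.range N,
        dotProduct
          (fun i => (∑ k, deriv (fun θ => L θ (n + 1) i k) θ₀ * w θ₀ (n + 1) k) +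
                    (∑ k, deriv (fun θ => R θ n i k) θ₀ * w θ₀ n k))
          (lam (n + 1)) := by
  have hw (n : ℕ) : HasDerivAt (fun θ => w θ n) (deriv (fun θ => w θ n) θ₀) θ₀ :=
    (hwdiff n).hasDerivAt
  have hw0' : deriv (fun θ => w θ 0) θ₀ = 0 := by simp [funext hw0]
  have hJ := HasDerivAt.fun_sum (u := Finset.range (N + 1)) fun n _ =>
    (hjdiff n).differentiableAt.hasDerivAt_comp_dotProduct (hw n)
  have htan (n : ℕ) (hn : n < N) :=
    tangent_of_forall_implicit_step (fun i k => (hLdiff (n + 1) i k).hasDerivAt)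
      (fun i k => (hRdiff n i k).hasDerivAt) (hw (n + 1)) (hw n) fun θ => hrec θ n hn
  rw [hJ.deriv]
  exact sum_dotProduct_tangent_eq_neg_sum_dotProduct_adjoint hN hw0' htan hterm hadj

theorem discrete_adjoint_gradient (d N : ℕ) (hN : 0 < N)
    (L R : ℝ → ℕ → Matrix (Fin d) (Fin d) ℝ)
    (w : ℝ → ℕ → (Fin d → ℝ))
    (j : ℕ → (Fin d → ℝ) → ℝ)
    (lam : ℕ → (Fin d → ℝ))
    (θ₀ : ℝ)
    -- differentiability hypotheses
    (hjdiff : ∀ n, Differentiable ℝ (j n))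
    (hwdiff : ∀ n, DifferentiableAt ℝ (fun θ => w θ n) θ₀)
    (hLdiff : ∀ n i k, DifferentiableAt ℝ (fun θ => L θ n i k) θ₀)
    (hRdiff : ∀ n i k, DifferentiableAt ℝ (fun θ => R θ n i k) θ₀)
    -- the initial state does not depend on θ
    (hw0 : ∀ θ, w θ 0 = w θ₀ 0)
    -- invertibility of the implicit operators
    (hinv : ∀ θ n, IsUnit (1 - L θ n))
    -- the forward recurrence
    (hrec : ∀ θ, ∀ n < N, (1 - L θ (n + 1)).mulVec (w θ (n + 1)) =
        (1 + R θ n).mulVec (w θ n))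
    -- terminal condition for the adjoint variables
    (hterm : (1 - L θ₀ N)ᵀ.mulVec (lam N) =
        -(fun i => fderiv ℝ (j N) (w θ₀ N) (Pi.single i 1)))
    -- adjoint equations
    (hadj : ∀ n, 1 ≤ n → n < N →
      (1 - L θ₀ n)ᵀ.mulVec (lam n) =
        (1 + R θ₀ n)ᵀ.mulVec (lam (n + 1)) -
          (fun i => fderiv ℝ (j n) (w θ₀ n) (Pi.single i 1))) :
    deriv (fun θ => ∑ n ∈ Finset.range (N + 1), j n (w θ n)) θ₀ =
      -∑ n ∈ Finset.range N,
        dotProduct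
          (fun i => (∑ k, deriv (fun θ => L θ (n + 1) i k) θ₀ * w θ₀ (n + 1) k) +
                    (∑ k, deriv (fun θ => R θ n i k) θ₀ * w θ₀ n k))
          (lam (n + 1)) :=
  discrete_adjoint_gradient_general d N hN L R w j lam θ₀ hjdiff hwdiff hLdiff hRdiff hw0 hrec hterm
    hadj
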